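/- arXiv:2401.07699 — 3 statements merged into one kernel-verified Lean document; each statement's English description precedes it below -/
import Mathlib

section
/- If f : {-1,1}^n → {-1,0,1} has degree at most d (i.e. f̂(S) = 0 for |S| > d), then ‖Δf‖_{L¹} ≤ 2d·‖f‖_{L¹}, where norms are with respect to the uniform probability measure on {-1,1}^n. -/
open Finset
open scoped ENNReal

namespace Hamming

variable {n : ℕ}

/-- Flip the `j`-th coordinate of a point of the Hamming cube `{-1,1}^n`
(encoded as `Fin n → Bool`). -/
def flip (δ : Fin n → Bool) (j : Fin n) : Fin n → Bool := Function.update δ j (!δ j)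

/-- The value `±1 ∈ ℂ` of a coordinate. -/
def sgn (b : Bool) : ℂ := if b then 1 else -1

/-- The Walsh function `w_S(δ) = ∏_{j ∈ S} δ_j`. -/
def walsh (S : Finset (Fin n)) (δ : Fin n → Bool) : ℂ := ∏ j ∈ S, sgn (δ j)

/-- The Fourier–Walsh coefficient `f̂(S) = 2⁻ⁿ ∑_δ f(δ) w_S(δ)`. -/
noncomputable def fourierCoeff (f : (Fin n → Bool) → ℂ) (S : Finset (Fin n)) : ℂ :=
  (2 ^ n : ℂ)⁻¹ * ∑ δ : Fin n → Bool, f δ * walsh S δ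

/-- The discrete partial derivative `∂_j f(δ) = (f(δ) - f(σ_j δ))/2`. -/
noncomputable def del (j : Fin n) (f : (Fin n → Bool) → ℂ) : (Fin n → Bool) → ℂ :=
  fun δ => (f δ - f (flip δ j)) / 2

/-- The Hamming cube Laplacian `Δ f = ∑_j ∂_j f`. -/
noncomputable def lap (f : (Fin n → Bool) → ℂ) : (Fin n → Bool) → ℂ :=
  fun δ => ∑ j : Fin n, del j f δ

/-- The `L^p` norm with respect to the uniform probability measure,
`‖f‖_p = (2⁻ⁿ ∑_δ |f(δ)|^p)^(1/p)`. -/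
noncomputable def pnorm (p : ℝ) (f : (Fin n → Bool) → ℂ) : ℝ :=
  ((2 ^ n : ℝ)⁻¹ * ∑ δ : Fin n → Bool, ‖f δ‖ ^ p) ^ (1 / p)

/-- The `L^∞` norm `‖f‖_∞ = max_δ |f(δ)|`. -/
noncomputable def supnorm (f : (Fin n → Bool) → ℂ) : ℝ :=
  Finset.univ.sup' Finset.univ_nonempty fun δ => ‖f δ‖

/-- The `L^p` norm for an exponent `p ∈ [1,∞]` (as an element of `ℝ≥0∞`). -/
noncomputable def enorm (p : ℝ≥0∞) (f : (Fin n → Bool) → ℂ) : ℝ :=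
  if p = ⊤ then supnorm f else pnorm p.toReal f

/-- The heat semigroup `e^{-tΔ} f = ∑_S e^{-t|S|} f̂(S) w_S`. -/
noncomputable def heat (t : ℝ) (f : (Fin n → Bool) → ℂ) : (Fin n → Bool) → ℂ :=
  fun δ => ∑ S : Finset (Fin n), (Real.exp (-t * S.card) : ℂ) * fourierCoeff f S * walsh S δ

/-- The spectrally defined complex power `(Δ + γ I)^z f = ∑_S (|S|+γ)^z f̂(S) w_S`. -/
noncomputable def Lpow (γ : ℝ) (z : ℂ) (f : (Fin n → Bool) → ℂ) : (Fin n → Bool) → ℂ :=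
  fun δ => ∑ S : Finset (Fin n), ((S.card : ℂ) + γ) ^ z * fourierCoeff f S * walsh S δ

end Hamming

open Hamming

section Aux
variable {n : ℕ}

lemma hflip_flip (δ : Fin n → Bool) (j : Fin n) : Hamming.flip (Hamming.flip δ j) j = δ := by
  simp [Hamming.flip, Function.update_idem]

lemma flip_involutive (j : Fin n) : Function.Involutive (Hamming.flip (n := n) · j) :=
  fun δ => hflip_flip δ j

lemma sum_flip (g : (Fin n → Bool) → ℂ) (j : Fin n) :
    ∑ δ : Fin n → Bool, g (Hamming.flip δ j) = ∑ δ : Fin n → Bool, g δ :=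
  Fintype.sum_bijective _ (flip_involutive j).bijective _ _ (fun _ => rfl)

lemma flip_apply_ne (δ : Fin n → Bool) {i j : Fin n} (h : i ≠ j) : Hamming.flip δ j i = δ i := by
  simp [Hamming.flip, Function.update_of_ne h]

lemma flip_apply_eq (δ : Fin n → Bool) (j : Fin n) : Hamming.flip δ j j = !δ j := by
  simp [Hamming.flip]

lemma walsh_flip (S : Finset (Fin n)) (δ : Fin n → Bool) (j : Fin n) :
    walsh S (Hamming.flip δ j) = (if j ∈ S then -1 else 1) * walsh S δ := by
  by_cases hj : j ∈ S
  · rw [if_pos hj, walsh, walsh, ← Finset.mul_prod_erase S _ hj,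
      ← Finset.mul_prod_erase S _ hj, flip_apply_eq]
    have h1 : ∏ i ∈ S.erase j, sgn (Hamming.flip δ j i) = ∏ i ∈ S.erase j, sgn (δ i) :=
      Finset.prod_congr rfl fun i hi => by
        rw [flip_apply_ne δ (Finset.ne_of_mem_erase hi)]
    rw [h1]
    cases h : δ j <;> simp [sgn]
  · rw [if_neg hj, one_mul, walsh, walsh]
    exact Finset.prod_congr rfl fun i hi => by
      rw [flip_apply_ne δ (fun hij => hj (by rwa [hij] at hi))]

lemma walsh_orth (δ ε : Fin n → Bool) :
    ∑ S : Finset (Fin n), walsh S δ * walsh S ε = if δ = ε then (2 ^ n : ℂ) else 0 := by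
  have key : ∑ S : Finset (Fin n), walsh S δ * walsh S ε
      = ∏ j : Fin n, (sgn (δ j) * sgn (ε j) + 1) := by
    rw [Finset.prod_add, Finset.powerset_univ]
    refine (Finset.sum_congr rfl fun S _ => ?_).symm
    rw [Finset.prod_const_one, mul_one, walsh, walsh, ← Finset.prod_mul_distrib]
  rw [key]
  by_cases h : δ = ε
  · subst h
    rw [if_pos rfl]
    have hfac : ∀ j : Fin n, sgn (δ j) * sgn (δ j) + 1 = 2 := fun j => by
      cases δ j <;> norm_num [sgn]
    simp only [hfac, Finset.prod_const, Finset.card_univ, Fintype.card_fin]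
  · rw [if_neg h]
    obtain ⟨j, hj⟩ : ∃ j, δ j ≠ ε j := by
      by_contra hc
      push_neg at hc
      exact h (funext hc)
    refine Finset.prod_eq_zero (Finset.mem_univ j) ?_
    cases hd : δ j <;> cases he : ε j <;> simp_all [sgn]

lemma parseval (g : (Fin n → Bool) → ℂ) :
    ∑ δ : Fin n → Bool, (g δ) ^ 2
      = (2 ^ n : ℂ) * ∑ S : Finset (Fin n), (Hamming.fourierCoeff g S) ^ 2 := by
  have h2 : (2 ^ n : ℂ) ≠ 0 := pow_ne_zero _ two_ne_zero
  have step1 : (2 ^ n : ℂ) * ∑ S : Finset (Fin n), (Hamming.fourierCoeff g S) ^ 2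
      = (2 ^ n : ℂ)⁻¹ * ∑ S : Finset (Fin n),
          (∑ δ : Fin n → Bool, g δ * walsh S δ) * (∑ ε : Fin n → Bool, g ε * walsh S ε) := by
    rw [Finset.mul_sum, Finset.mul_sum]
    refine Finset.sum_congr rfl fun S _ => ?_
    simp only [Hamming.fourierCoeff]
    field_simp
  have step2 : ∑ S : Finset (Fin n),
      (∑ δ : Fin n → Bool, g δ * walsh S δ) * (∑ ε : Fin n → Bool, g ε * walsh S ε)
      = ∑ δ : Fin n → Bool, ∑ ε : Fin n → Bool,
          (g δ * g ε) * ∑ S : Finset (Fin n), walsh S δ * walsh S ε :=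
    calc ∑ S : Finset (Fin n),
          (∑ δ : Fin n → Bool, g δ * walsh S δ) * (∑ ε : Fin n → Bool, g ε * walsh S ε)
        = ∑ S : Finset (Fin n), ∑ δ : Fin n → Bool, ∑ ε : Fin n → Bool,
            (g δ * g ε) * (walsh S δ * walsh S ε) := by
          refine Finset.sum_congr rfl fun S _ => ?_
          rw [Finset.sum_mul_sum]
          exact Finset.sum_congr rfl fun δ _ => Finset.sum_congr rfl fun ε _ => by ring
      _ = ∑ δ : Fin n → Bool, ∑ S : Finset (Fin n), ∑ ε : Fin n → Bool,
            (g δ * g ε) * (walsh S δ * walsh S ε) := Finset.sum_comm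
      _ = ∑ δ : Fin n → Bool, ∑ ε : Fin n → Bool, ∑ S : Finset (Fin n),
            (g δ * g ε) * (walsh S δ * walsh S ε) :=
          Finset.sum_congr rfl fun δ _ => Finset.sum_comm
      _ = ∑ δ : Fin n → Bool, ∑ ε : Fin n → Bool,
            (g δ * g ε) * ∑ S : Finset (Fin n), walsh S δ * walsh S ε :=
          Finset.sum_congr rfl fun δ _ => Finset.sum_congr rfl fun ε _ =>
            (Finset.mul_sum _ _ _).symm
  have step3 : ∀ δ : Fin n → Bool, ∑ ε : Fin n → Bool,
      (g δ * g ε) * ∑ S : Finset (Fin n), walsh S δ * walsh S ε = g δ ^ 2 * 2 ^ n := by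
    intro δ
    simp only [walsh_orth, mul_ite, mul_zero]
    rw [Finset.sum_ite_eq (Finset.univ) δ (fun ε => g δ * g ε * 2 ^ n)]
    simp [sq]
  rw [step1, step2]
  simp only [step3]
  rw [← Finset.sum_mul, mul_comm _ ((2:ℂ)^n), ← mul_assoc, inv_mul_cancel₀ h2, one_mul]

lemma del_coeff (f : (Fin n → Bool) → ℂ) (j : Fin n) (S : Finset (Fin n)) :
    Hamming.fourierCoeff (del j f) S = if j ∈ S then Hamming.fourierCoeff f S else 0 := by
  have hsub : ∑ δ : Fin n → Bool, f (Hamming.flip δ j) * walsh S δ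
      = (if j ∈ S then -1 else 1) * ∑ δ : Fin n → Bool, f δ * walsh S δ := by
    have h := sum_flip (fun δ => f (Hamming.flip δ j) * walsh S δ) j
    rw [← h]
    simp only [hflip_flip]
    rw [Finset.mul_sum]
    refine Finset.sum_congr rfl fun δ _ => ?_
    rw [walsh_flip]
    ring
  have hdel : Hamming.fourierCoeff (del j f) S
      = (2 ^ n : ℂ)⁻¹ * ((∑ δ : Fin n → Bool, f δ * walsh S δ
          - (if j ∈ S then -1 else 1) * ∑ δ : Fin n → Bool, f δ * walsh S δ) / 2) := by
    simp only [Hamming.fourierCoeff]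
    rw [← hsub]
    congr 1
    rw [← Finset.sum_sub_distrib, Finset.sum_div]
    refine Finset.sum_congr rfl fun δ _ => ?_
    simp only [Hamming.del]
    ring
  rw [hdel]
  by_cases hj : j ∈ S <;> simp [hj, Hamming.fourierCoeff]

end Aux

lemma fourier_real {n : ℕ} (f : (Fin n → Bool) → ℂ)
    (hval : ∀ δ, f δ = -1 ∨ f δ = 0 ∨ f δ = 1) (S : Finset (Fin n)) :
    Hamming.fourierCoeff f S = (((Hamming.fourierCoeff f S).re : ℝ) : ℂ) := by
  have hconj : (starRingEnd ℂ) (Hamming.fourierCoeff f S) = Hamming.fourierCoeff f S := by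
    simp only [Hamming.fourierCoeff, map_mul, map_inv₀, map_pow, map_sum]
    congr 1
    · rw [map_ofNat]
    · refine Finset.sum_congr rfl fun δ _ => ?_
      congr 1
      · rcases hval δ with h|h|h <;> simp [h]
      · simp only [walsh, map_prod]
        exact Finset.prod_congr rfl fun i _ => by cases δ i <;> simp [sgn]
  exact (Complex.conj_eq_iff_re.mp hconj).symm

lemma key_real (t : ℝ) (h : |t| ≤ 2 * t ^ 2) :
    ‖(t : ℂ)‖ ≤ 2 * (((t : ℂ) ^ 2).re) := by
  rw [Complex.norm_real, Real.norm_eq_abs, show ((t:ℂ))^2 = ((t^2 : ℝ) : ℂ) by push_cast; ring,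
    Complex.ofReal_re]
  exact h

lemma abs_le_two_re_sq {a b : ℂ} (ha : a = -1 ∨ a = 0 ∨ a = 1)
    (hb : b = -1 ∨ b = 0 ∨ b = 1) :
    ‖(a - b) / 2‖ ≤ 2 * (((a - b) / 2) ^ 2).re := by
  have h : ∃ t : ℝ, (a - b) / 2 = (t : ℂ) ∧ |t| ≤ 2 * t ^ 2 := by
    rcases ha with rfl|rfl|rfl <;> rcases hb with rfl|rfl|rfl
    exacts [⟨0, by norm_num [abs_le]⟩, ⟨-1/2, by norm_num [abs_le]⟩, ⟨-1, by norm_num [abs_le]⟩,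
      ⟨1/2, by norm_num [abs_le]⟩, ⟨0, by norm_num [abs_le]⟩, ⟨-1/2, by norm_num [abs_le]⟩,
      ⟨1, by norm_num [abs_le]⟩, ⟨1/2, by norm_num [abs_le]⟩, ⟨0, by norm_num [abs_le]⟩]
  obtain ⟨t, ht, h2⟩ := h
  rw [ht]
  exact key_real t h2

lemma re_sq_abs {a : ℂ} (ha : a = -1 ∨ a = 0 ∨ a = 1) :
    ((a ^ 2).re) = ‖a‖ := by
  rcases ha with rfl|rfl|rfl <;> norm_num

/-- If `f : {-1,1}ⁿ → {-1,0,1}` has degree at most `d`, then `‖Δf‖₁ ≤ 2d ‖f‖₁`. -/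
theorem bernstein_l1_boolean (n d : ℕ) (f : (Fin n → Bool) → ℂ)
    (hval : ∀ δ, f δ = -1 ∨ f δ = 0 ∨ f δ = 1)
    (hf : ∀ S : Finset (Fin n), d < S.card → fourierCoeff f S = 0) :
    pnorm 1 (lap f) ≤ 2 * (d : ℝ) * pnorm 1 f := by
  have h2R : (0:ℝ) < (2:ℝ) ^ n := by positivity
  set r : Finset (Fin n) → ℝ := fun S => (Hamming.fourierCoeff f S).re with hr
  have hreal : ∀ S, Hamming.fourierCoeff f S = ((r S : ℝ) : ℂ) :=
    fun S => fourier_real f hval S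
  -- complex Parseval identity for the derivatives
  have hdelsq : ∀ j : Fin n, ∑ δ : Fin n → Bool, (del j f δ) ^ 2
      = (2 ^ n : ℂ) * ∑ S : Finset (Fin n),
          (if j ∈ S then Hamming.fourierCoeff f S else 0) ^ 2 := by
    intro j
    rw [parseval (del j f)]
    congr 1
    exact Finset.sum_congr rfl fun S _ => by rw [del_coeff]
  have hkey : ∑ j : Fin n, ∑ δ : Fin n → Bool, (del j f δ) ^ 2
      = (2 ^ n : ℂ) * ∑ S : Finset (Fin n), (S.card : ℂ) * (Hamming.fourierCoeff f S) ^ 2 := by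
    simp only [hdelsq]
    rw [← Finset.mul_sum]
    congr 1
    rw [Finset.sum_comm]
    refine Finset.sum_congr rfl fun S _ => ?_
    have : ∀ j : Fin n, (if j ∈ S then Hamming.fourierCoeff f S else 0) ^ 2
        = if j ∈ S then (Hamming.fourierCoeff f S) ^ 2 else 0 := fun j => by
      split <;> simp
    simp only [this]
    rw [Finset.sum_ite_mem, Finset.univ_inter, Finset.sum_const, nsmul_eq_mul]
  -- real parts
  have hRe : ∑ j : Fin n, ∑ δ : Fin n → Bool, ((del j f δ) ^ 2).re
      = (2 ^ n : ℝ) * ∑ S : Finset (Fin n), (S.card : ℝ) * (r S) ^ 2 := by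
    have hcast : (2 ^ n : ℂ) * ∑ S : Finset (Fin n), (S.card : ℂ) * (Hamming.fourierCoeff f S) ^ 2
        = (((2 ^ n : ℝ) * ∑ S : Finset (Fin n), (S.card : ℝ) * (r S) ^ 2 : ℝ) : ℂ) := by
      simp only [hreal]
      push_cast
      ring
    calc ∑ j : Fin n, ∑ δ : Fin n → Bool, ((del j f δ) ^ 2).re
        = (∑ j : Fin n, ∑ δ : Fin n → Bool, (del j f δ) ^ 2).re := by
          rw [Complex.re_sum]
          exact Finset.sum_congr rfl fun j _ => (Complex.re_sum _ _).symm
      _ = (2 ^ n : ℝ) * ∑ S : Finset (Fin n), (S.card : ℝ) * (r S) ^ 2 := by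
          rw [hkey, hcast, Complex.ofReal_re]
  have hParsef : ∑ δ : Fin n → Bool, ‖f δ‖
      = (2 ^ n : ℝ) * ∑ S : Finset (Fin n), (r S) ^ 2 := by
    have hcast : (2 ^ n : ℂ) * ∑ S : Finset (Fin n), (Hamming.fourierCoeff f S) ^ 2
        = (((2 ^ n : ℝ) * ∑ S : Finset (Fin n), (r S) ^ 2 : ℝ) : ℂ) := by
      simp only [hreal]
      push_cast
      ring
    calc ∑ δ : Fin n → Bool, ‖f δ‖
        = ∑ δ : Fin n → Bool, ((f δ) ^ 2).re :=
          Finset.sum_congr rfl fun δ _ => (re_sq_abs (hval δ)).symm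
      _ = (∑ δ : Fin n → Bool, (f δ) ^ 2).re := (Complex.re_sum _ _).symm
      _ = (2 ^ n : ℝ) * ∑ S : Finset (Fin n), (r S) ^ 2 := by
          rw [parseval, hcast, Complex.ofReal_re]
  -- the pointwise bound and the triangle inequality
  have hA : ∑ δ : Fin n → Bool, ‖lap f δ‖
      ≤ ∑ j : Fin n, ∑ δ : Fin n → Bool, 2 * ((del j f δ) ^ 2).re := by
    calc ∑ δ : Fin n → Bool, ‖lap f δ‖
        ≤ ∑ δ : Fin n → Bool, ∑ j : Fin n, ‖del j f δ‖ :=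
          Finset.sum_le_sum fun δ _ => norm_sum_le _ _
      _ ≤ ∑ δ : Fin n → Bool, ∑ j : Fin n, 2 * ((del j f δ) ^ 2).re :=
          Finset.sum_le_sum fun δ _ => Finset.sum_le_sum fun j _ =>
            abs_le_two_re_sq (hval δ) (hval (Hamming.flip δ j))
      _ = ∑ j : Fin n, ∑ δ : Fin n → Bool, 2 * ((del j f δ) ^ 2).re := Finset.sum_comm
  -- the degree bound
  have hC : ∑ S : Finset (Fin n), (S.card : ℝ) * (r S) ^ 2
      ≤ (d : ℝ) * ∑ S : Finset (Fin n), (r S) ^ 2 := by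
    rw [Finset.mul_sum]
    refine Finset.sum_le_sum fun S _ => ?_
    by_cases hS : S.card ≤ d
    · exact mul_le_mul_of_nonneg_right (by exact_mod_cast hS) (sq_nonneg _)
    · have h0 : r S = 0 := by
        rw [hr]
        simp [hf S (lt_of_not_ge hS)]
      rw [h0]
      simp
  -- assemble
  have final : ∑ δ : Fin n → Bool, ‖lap f δ‖
      ≤ 2 * (d : ℝ) * ∑ δ : Fin n → Bool, ‖f δ‖ := by
    calc ∑ δ : Fin n → Bool, ‖lap f δ‖
        ≤ ∑ j : Fin n, ∑ δ : Fin n → Bool, 2 * ((del j f δ) ^ 2).re := hA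
      _ = 2 * ((2 ^ n : ℝ) * ∑ S : Finset (Fin n), (S.card : ℝ) * (r S) ^ 2) := by
          simp only [← Finset.mul_sum]
          rw [hRe]
      _ ≤ 2 * ((2 ^ n : ℝ) * ((d : ℝ) * ∑ S : Finset (Fin n), (r S) ^ 2)) := by
          have := mul_le_mul_of_nonneg_left hC h2R.le
          linarith
      _ = 2 * (d : ℝ) * ((2 ^ n : ℝ) * ∑ S : Finset (Fin n), (r S) ^ 2) := by ring
      _ = 2 * (d : ℝ) * ∑ δ : Fin n → Bool, ‖f δ‖ := by rw [← hParsef]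
  simp only [Hamming.pnorm]
  norm_num
  calc ((2 : ℝ) ^ n)⁻¹ * ∑ δ : Fin n → Bool, ‖lap f δ‖
      ≤ ((2 : ℝ) ^ n)⁻¹ * (2 * (d : ℝ) * ∑ δ : Fin n → Bool, ‖f δ‖) :=
        mul_le_mul_of_nonneg_left final (by positivity)
    _ = 2 * (d : ℝ) * (((2 : ℝ) ^ n)⁻¹ * ∑ δ : Fin n → Bool, ‖f δ‖) := by ring
end

section
/- Let p ∈ (1,2), ε ∈ (0,p−1), and let θ ∈ (0,1) satisfy 1/p = θ/(p−ε) + (1−θ)/2. If f : {-1,1}^n → ℂ satisfies f̂(S) = 0 for all |S| < d, then for every t ≥ 0, ‖e^{-tΔ} f‖_{L^p} ≤ exp(−(1−θ)·t·d)·‖f‖_{L²}^{1−θ}·‖f‖_{L^{p−ε}}^{θ}. -/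
open Finset
open scoped ENNReal

open Hamming

namespace HeatAux

variable {n : ℕ}

lemma sgn_mul_sgn (a b : Bool) :
    sgn a * sgn b = if a = b then (1 : ℂ) else -1 := by
  cases a <;> cases b <;> simp [sgn]

/-- The (unnormalized) heat kernel on the cube. -/
noncomputable def ker (ρ : ℝ) (η δ : Fin n → Bool) : ℝ :=
  ∏ j : Fin n, (1 + ρ * (if η j = δ j then 1 else -1))

lemma ker_nonneg {ρ : ℝ} (h0 : 0 ≤ ρ) (h1 : ρ ≤ 1) (η δ : Fin n → Bool) :
    0 ≤ ker ρ η δ := by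
  refine Finset.prod_nonneg fun j _ => ?_
  by_cases h : η j = δ j <;> simp [h] <;> linarith

lemma ker_symm (ρ : ℝ) (η δ : Fin n → Bool) : ker ρ η δ = ker ρ δ η := by
  unfold ker
  refine Finset.prod_congr rfl fun j _ => ?_
  by_cases h : η j = δ j
  · rw [if_pos h, if_pos h.symm]
  · rw [if_neg h, if_neg (Ne.symm h)]

lemma sum_ker (ρ : ℝ) (η : Fin n → Bool) :
    ∑ δ : Fin n → Bool, ker ρ η δ = 2 ^ n := by
  unfold ker
  have hps := Finset.prod_univ_sum (fun _ : Fin n => (Finset.univ : Finset Bool))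
      (fun j b => 1 + ρ * (if η j = b then 1 else -1))
  rw [Fintype.piFinset_univ] at hps
  rw [← hps]
  have h : ∀ j : Fin n,
      (∑ b : Bool, (1 + ρ * (if η j = b then 1 else -1))) = 2 := by
    intro j; cases h : η j <;> simp <;> ring
  rw [Finset.prod_congr rfl fun j _ => h j]
  simp

lemma sum_pow_walsh (ρ : ℝ) (η δ : Fin n → Bool) :
    ∑ S : Finset (Fin n), (ρ : ℂ) ^ S.card * (walsh S η * walsh S δ)
      = (ker ρ η δ : ℂ) := by
  have key : ∀ S : Finset (Fin n), (ρ : ℂ) ^ S.card * (walsh S η * walsh S δ)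
      = ∏ j ∈ S, ((ρ : ℂ) * (if η j = δ j then 1 else -1)) := by
    intro S
    rw [Finset.prod_mul_distrib, Finset.prod_const]
    congr 1
    rw [walsh, walsh, ← Finset.prod_mul_distrib]
    exact Finset.prod_congr rfl fun j _ => sgn_mul_sgn _ _
  have hker : (ker ρ η δ : ℂ)
      = ∏ j : Fin n, ((ρ : ℂ) * (if η j = δ j then 1 else -1) + 1) := by
    unfold ker
    push_cast [apply_ite (fun x : ℝ => (x : ℂ))]
    exact Finset.prod_congr rfl fun j _ => by ring
  rw [hker, Finset.prod_add]
  simp only [Finset.prod_const_one, mul_one, Finset.powerset_univ]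
  exact Finset.sum_congr rfl fun S _ => (key S)

lemma heat_eq_ker (t : ℝ) (f : (Fin n → Bool) → ℂ) (δ : Fin n → Bool) :
    heat t f δ
      = (2 ^ n : ℂ)⁻¹ * ∑ η : Fin n → Bool, (ker (Real.exp (-t)) η δ : ℂ) * f η := by
  set ρ := Real.exp (-t) with hρ
  have h1 : ∀ S : Finset (Fin n),
      ((Real.exp (-t * S.card) : ℝ) : ℂ) = (ρ : ℂ) ^ S.card := by
    intro S
    rw [mul_comm, Real.exp_nat_mul, Complex.ofReal_pow]
  calc heat t f δ
      = ∑ S : Finset (Fin n), ∑ η : Fin n → Bool,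
          (2 ^ n : ℂ)⁻¹ * (f η * ((ρ : ℂ) ^ S.card * (walsh S η * walsh S δ))) := by
        unfold Hamming.heat Hamming.fourierCoeff
        refine Finset.sum_congr rfl fun S _ => ?_
        rw [h1 S, Finset.mul_sum, Finset.mul_sum, Finset.sum_mul]
        exact Finset.sum_congr rfl fun η _ => by ring
    _ = ∑ η : Fin n → Bool, (2 ^ n : ℂ)⁻¹ *
          (f η * ∑ S : Finset (Fin n), (ρ : ℂ) ^ S.card * (walsh S η * walsh S δ)) := by
        rw [Finset.sum_comm]
        exact Finset.sum_congr rfl fun η _ => by rw [Finset.mul_sum, Finset.mul_sum]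
    _ = (2 ^ n : ℂ)⁻¹ * ∑ η : Fin n → Bool, (ker ρ η δ : ℂ) * f η := by
        rw [Finset.mul_sum]
        exact Finset.sum_congr rfl fun η _ => by rw [sum_pow_walsh]; ring

lemma abs_heat_le (t : ℝ) (ht : 0 ≤ t) (f : (Fin n → Bool) → ℂ) (δ : Fin n → Bool) :
    ‖heat t f δ‖
      ≤ (2 ^ n : ℝ)⁻¹ * ∑ η : Fin n → Bool,
          ker (Real.exp (-t)) η δ * ‖f η‖ := by
  have hρ0 : (0:ℝ) ≤ Real.exp (-t) := (Real.exp_pos _).le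
  have hρ1 : Real.exp (-t) ≤ 1 := Real.exp_le_one_iff.mpr (by linarith)
  rw [heat_eq_ker, norm_mul]
  have h2 : ‖(2 ^ n : ℂ)⁻¹‖ = (2 ^ n : ℝ)⁻¹ := by
    rw [norm_inv]
    norm_num
  rw [h2]
  gcongr
  refine (norm_sum_le _ _).trans ?_
  refine le_of_eq (Finset.sum_congr rfl fun η _ => ?_)
  rw [norm_mul, Complex.norm_real, Real.norm_eq_abs, abs_of_nonneg (ker_nonneg hρ0 hρ1 _ _)]

lemma pnorm_nonneg (p : ℝ) (f : (Fin n → Bool) → ℂ) : 0 ≤ pnorm p f := by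
  unfold pnorm
  positivity

lemma pnorm_heat_le (q t : ℝ) (hq : 1 ≤ q) (ht : 0 ≤ t) (f : (Fin n → Bool) → ℂ) :
    pnorm q (heat t f) ≤ pnorm q f := by
  set ρ := Real.exp (-t) with hρdef
  have hρ0 : (0:ℝ) ≤ ρ := (Real.exp_pos _).le
  have hρ1 : ρ ≤ 1 := Real.exp_le_one_iff.mpr (by linarith)
  have hN : (0:ℝ) < (2 : ℝ) ^ n := by positivity
  have key : ∀ δ : Fin n → Bool, ‖heat t f δ‖ ^ q
      ≤ ∑ η : Fin n → Bool, ((2 ^ n : ℝ)⁻¹ * ker ρ η δ) * ‖f η‖ ^ q := by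
    intro δ
    have h1 : ‖heat t f δ‖ ^ q
        ≤ (∑ η : Fin n → Bool, ((2 ^ n : ℝ)⁻¹ * ker ρ η δ) * ‖f η‖) ^ q := by
      refine Real.rpow_le_rpow (norm_nonneg _) ?_ (by linarith)
      refine (abs_heat_le t ht f δ).trans (le_of_eq ?_)
      rw [Finset.mul_sum]
      exact Finset.sum_congr rfl fun η _ => by ring
    refine h1.trans ?_
    refine Real.rpow_arith_mean_le_arith_mean_rpow Finset.univ _ _
      (fun η _ => mul_nonneg (by positivity) (ker_nonneg hρ0 hρ1 _ _))
      ?_ (fun η _ => norm_nonneg _) hq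
    rw [← Finset.mul_sum]
    rw [Finset.sum_congr rfl fun η _ => ker_symm ρ η δ, sum_ker]
    try field_simp
  have hsum : ∑ δ : Fin n → Bool, ‖heat t f δ‖ ^ q
      ≤ ∑ δ : Fin n → Bool, ‖f δ‖ ^ q := by
    refine (Finset.sum_le_sum fun δ _ => key δ).trans (le_of_eq ?_)
    rw [Finset.sum_comm]
    refine Finset.sum_congr rfl fun η _ => ?_
    have : ∑ δ : Fin n → Bool, ((2 ^ n : ℝ)⁻¹ * ker ρ η δ) * ‖f η‖ ^ q
        = ((2 ^ n : ℝ)⁻¹ * ∑ δ : Fin n → Bool, ker ρ η δ) * ‖f η‖ ^ q := by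
      rw [Finset.mul_sum, Finset.sum_mul]
      try exact Finset.sum_congr rfl fun δ _ => by ring
    rw [this, sum_ker]
    try field_simp
  unfold pnorm
  refine Real.rpow_le_rpow (by positivity) ?_ (by positivity)
  exact mul_le_mul_of_nonneg_left hsum (by positivity)

lemma conj_walsh (S : Finset (Fin n)) (δ : Fin n → Bool) :
    (starRingEnd ℂ) (walsh S δ) = walsh S δ := by
  unfold walsh
  rw [map_prod]
  refine Finset.prod_congr rfl fun j _ => ?_
  cases δ j <;> simp [sgn]

lemma walsh_orth (S T : Finset (Fin n)) :
    ∑ δ : Fin n → Bool, walsh S δ * walsh T δ = if S = T then (2 ^ n : ℂ) else 0 := by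
  have h : ∀ δ : Fin n → Bool, walsh S δ * walsh T δ
      = ∏ j : Fin n,
          ((if j ∈ S then sgn (δ j) else 1) * (if j ∈ T then sgn (δ j) else 1)) := by
    intro δ
    rw [Finset.prod_mul_distrib, walsh, walsh]
    congr 1 <;> rw [Finset.prod_ite_mem, Finset.univ_inter]
  simp only [h]
  have hps := Finset.prod_univ_sum (fun _ : Fin n => (Finset.univ : Finset Bool))
      (fun j b => (if j ∈ S then sgn b else 1) * (if j ∈ T then sgn b else 1))
  rw [Fintype.piFinset_univ] at hps
  rw [← hps]
  have hj : ∀ j : Fin n,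
      (∑ b : Bool, (if j ∈ S then sgn b else 1) * (if j ∈ T then sgn b else 1))
        = if (j ∈ S ↔ j ∈ T) then 2 else 0 := by
    intro j
    by_cases hS : j ∈ S <;> by_cases hT : j ∈ T <;>
      simp [hS, hT, sgn] <;> norm_num
  rw [Finset.prod_congr rfl fun j _ => hj j]
  by_cases hST : S = T
  · subst hST; simp
  · rw [if_neg hST]
    obtain ⟨j, hj'⟩ : ∃ j, ¬(j ∈ S ↔ j ∈ T) := by
      by_contra hc
      push_neg at hc
      exact hST (Finset.ext fun j => hc j)
    exact Finset.prod_eq_zero (Finset.mem_univ j) (if_neg hj')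

lemma rpow_two_abs (z : ℂ) : ‖z‖ ^ (2:ℝ) = Complex.normSq z := by
  rw [show (2:ℝ) = ((2:ℕ):ℝ) by norm_num, Real.rpow_natCast, Complex.sq_norm]

lemma parseval (c : Finset (Fin n) → ℂ) :
    (2 ^ n : ℝ)⁻¹ * ∑ δ : Fin n → Bool,
        ‖∑ S : Finset (Fin n), c S * walsh S δ‖ ^ (2:ℝ)
      = ∑ S : Finset (Fin n), ‖c S‖ ^ (2:ℝ) := by
  have main : ∑ δ : Fin n → Bool,
      ((Complex.normSq (∑ S : Finset (Fin n), c S * walsh S δ) : ℝ) : ℂ)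
        = (2 ^ n : ℂ) * ∑ S : Finset (Fin n), ((Complex.normSq (c S) : ℝ) : ℂ) := by
    have expand : ∀ δ : Fin n → Bool,
        ((Complex.normSq (∑ S : Finset (Fin n), c S * walsh S δ) : ℝ) : ℂ)
          = ∑ S : Finset (Fin n), ∑ T : Finset (Fin n),
              c S * (starRingEnd ℂ) (c T) * (walsh S δ * walsh T δ) := by
      intro δ
      rw [← Complex.mul_conj, map_sum, Finset.sum_mul_sum]
      refine Finset.sum_congr rfl fun S _ => Finset.sum_congr rfl fun T _ => ?_
      rw [map_mul, conj_walsh]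
      ring
    simp only [expand]
    rw [Finset.sum_comm]
    have swap : ∀ S : Finset (Fin n),
        ∑ δ : Fin n → Bool, ∑ T : Finset (Fin n),
            c S * (starRingEnd ℂ) (c T) * (walsh S δ * walsh T δ)
          = (2 ^ n : ℂ) * ((Complex.normSq (c S) : ℝ) : ℂ) := by
      intro S
      rw [Finset.sum_comm]
      have : ∀ T : Finset (Fin n),
          ∑ δ : Fin n → Bool, c S * (starRingEnd ℂ) (c T) * (walsh S δ * walsh T δ)
            = c S * (starRingEnd ℂ) (c T) * (if S = T then (2 ^ n : ℂ) else 0) := by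
        intro T
        rw [← Finset.mul_sum, walsh_orth]
      rw [Finset.sum_congr rfl fun T _ => this T]
      simp [Finset.sum_ite_eq, Complex.mul_conj]
      ring
    rw [Finset.sum_congr rfl fun S _ => swap S, ← Finset.mul_sum]
  have main' : ∑ δ : Fin n → Bool,
      Complex.normSq (∑ S : Finset (Fin n), c S * walsh S δ)
        = (2 ^ n : ℝ) * ∑ S : Finset (Fin n), Complex.normSq (c S) := by
    have := main
    push_cast at this
    exact_mod_cast this
  simp only [rpow_two_abs]
  rw [main']
  have hN : ((2:ℝ) ^ n) ≠ 0 := by positivity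
  field_simp

lemma ker_one (η δ : Fin n → Bool) :
    ker 1 η δ = if η = δ then (2:ℝ) ^ n else 0 := by
  unfold ker
  by_cases hη : η = δ
  · subst hη
    simp
    norm_num
  · rw [if_neg hη]
    obtain ⟨j, hj⟩ : ∃ j, η j ≠ δ j := by
      by_contra hc
      push_neg at hc
      exact hη (funext hc)
    refine Finset.prod_eq_zero (Finset.mem_univ j) ?_
    simp [hj]

lemma sum_walsh_dual (η δ : Fin n → Bool) :
    ∑ S : Finset (Fin n), walsh S η * walsh S δ
      = if η = δ then (2 ^ n : ℂ) else 0 := by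
  have h := sum_pow_walsh (n := n) 1 η δ
  simp only [Complex.ofReal_one, one_pow, one_mul] at h
  rw [h, ker_one]
  by_cases hη : η = δ <;> simp [hη]

lemma inversion (f : (Fin n → Bool) → ℂ) (δ : Fin n → Bool) :
    ∑ S : Finset (Fin n), fourierCoeff f S * walsh S δ = f δ := by
  unfold Hamming.fourierCoeff
  have h1 : ∀ S : Finset (Fin n),
      ((2 ^ n : ℂ)⁻¹ * ∑ η : Fin n → Bool, f η * walsh S η) * walsh S δ
        = ∑ η : Fin n → Bool, (2 ^ n : ℂ)⁻¹ * (f η * (walsh S η * walsh S δ)) := by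
    intro S
    rw [mul_assoc, Finset.sum_mul, Finset.mul_sum]
    try exact Finset.sum_congr rfl fun η _ => by ring
  rw [Finset.sum_congr rfl fun S _ => h1 S, Finset.sum_comm]
  have h2 : ∀ η : Fin n → Bool,
      ∑ S : Finset (Fin n), (2 ^ n : ℂ)⁻¹ * (f η * (walsh S η * walsh S δ))
        = (2 ^ n : ℂ)⁻¹ * (f η * (if η = δ then (2 ^ n : ℂ) else 0)) := by
    intro η
    rw [← Finset.mul_sum, ← Finset.mul_sum, sum_walsh_dual]
  have h3 : ∀ η : Fin n → Bool,
      (2 ^ n : ℂ)⁻¹ * (f η * (if η = δ then (2 ^ n : ℂ) else 0))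
        = if η = δ then f η else 0 := by
    intro η
    by_cases hη : η = δ
    · rw [if_pos hη, if_pos hη]
      have h2n : (2 ^ n : ℂ) ≠ 0 := pow_ne_zero _ two_ne_zero
      rw [mul_comm (f η), ← mul_assoc, inv_mul_cancel₀ h2n, one_mul]
    · simp [hη]
  rw [Finset.sum_congr rfl fun η _ => (h2 η).trans (h3 η)]
  simp

lemma pnorm_two_sq (f : (Fin n → Bool) → ℂ) :
    (2 ^ n : ℝ)⁻¹ * ∑ δ : Fin n → Bool, ‖f δ‖ ^ (2:ℝ)
      = ∑ S : Finset (Fin n), ‖fourierCoeff f S‖ ^ (2:ℝ) := by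
  have h := parseval (n := n) (fourierCoeff f)
  simp only [inversion] at h
  exact h

lemma pnorm_two_heat_le (d : ℕ) (f : (Fin n → Bool) → ℂ)
    (hf : ∀ S : Finset (Fin n), S.card < d → fourierCoeff f S = 0)
    (t : ℝ) (ht : 0 ≤ t) :
    pnorm 2 (heat t f) ≤ Real.exp (-t * d) * pnorm 2 f := by
  have hL : (2 ^ n : ℝ)⁻¹ * ∑ δ : Fin n → Bool, ‖heat t f δ‖ ^ (2:ℝ)
      = ∑ S : Finset (Fin n),
          ‖(Real.exp (-t * S.card) : ℂ) * fourierCoeff f S‖ ^ (2:ℝ) := by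
    have hp := parseval (n := n)
      (fun S => (Real.exp (-t * S.card) : ℂ) * fourierCoeff f S)
    simp only [Hamming.heat]
    exact hp
  have hterm : ∀ S : Finset (Fin n),
      ‖(Real.exp (-t * S.card) : ℂ) * fourierCoeff f S‖ ^ (2:ℝ)
        ≤ Real.exp (-t * d) ^ (2:ℝ) * ‖fourierCoeff f S‖ ^ (2:ℝ) := by
    intro S
    by_cases hS : S.card < d
    · rw [hf S hS, mul_zero, norm_zero, Real.zero_rpow two_ne_zero]
      positivity
    · push_neg at hS
      rw [norm_mul, Complex.norm_real, Real.norm_eq_abs, abs_of_nonneg (Real.exp_pos _).le,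
        Real.mul_rpow (Real.exp_pos _).le (norm_nonneg _)]
      refine mul_le_mul_of_nonneg_right ?_ (by positivity)
      refine Real.rpow_le_rpow (Real.exp_pos _).le ?_ (by norm_num)
      refine Real.exp_le_exp.mpr ?_
      have : t * d ≤ t * S.card := by
        refine mul_le_mul_of_nonneg_left ?_ ht
        exact_mod_cast hS
      nlinarith
  have hsum : (2 ^ n : ℝ)⁻¹ * ∑ δ : Fin n → Bool, ‖heat t f δ‖ ^ (2:ℝ)
      ≤ Real.exp (-t * d) ^ (2:ℝ) *
          ((2 ^ n : ℝ)⁻¹ * ∑ δ : Fin n → Bool, ‖f δ‖ ^ (2:ℝ)) := by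
    rw [hL, pnorm_two_sq f, Finset.mul_sum]
    exact Finset.sum_le_sum fun S _ => hterm S
  unfold pnorm
  refine le_trans (Real.rpow_le_rpow (by positivity) hsum (by norm_num)) ?_
  rw [Real.mul_rpow (by positivity) (by positivity),
    ← Real.rpow_mul (Real.exp_pos _).le]
  norm_num

set_option maxHeartbeats 1000000 in
lemma interp (g : (Fin n → Bool) → ℂ) (p q θ : ℝ) (hq1 : 1 < q) (hqp : q < p)
    (hp2 : p < 2) (hθ0 : 0 < θ) (hθ1 : θ < 1)
    (hθeq : 1/p = θ/q + (1-θ)/2) :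
    pnorm p g ≤ pnorm 2 g ^ (1-θ) * pnorm q g ^ θ := by
  have hp0 : 0 < p := by linarith
  have hq0 : 0 < q := by linarith
  set a := q / (θ * p) with ha
  set b := 2 / ((1-θ) * p) with hb
  have hθq : θ / q < 1 / p := by
    rw [hθeq]
    have : 0 < (1-θ)/2 := by linarith
    linarith
  have hθ2 : (1-θ)/2 < 1 / p := by
    rw [hθeq]
    have : 0 < θ/q := by positivity
    linarith
  have hθpq : θ * p < q := by
    have h := (div_lt_div_iff₀ hq0 hp0).mp hθq
    linarith
  have hθp2 : (1-θ) * p < 2 := by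
    have h := (div_lt_div_iff₀ (by norm_num : (0:ℝ) < 2) hp0).mp hθ2
    linarith
  have hθp0 : 0 < θ * p := by positivity
  have hθp0' : 0 < (1-θ) * p := mul_pos (by linarith) hp0
  have ha1 : 1 < a := by
    rw [ha, lt_div_iff₀ hθp0]
    linarith
  have hb1 : 1 < b := by
    rw [hb, lt_div_iff₀ hθp0']
    linarith
  have ha0 : 0 < a := by linarith
  have hb0 : 0 < b := by linarith
  have hab : a⁻¹ + b⁻¹ = 1 := by
    rw [ha, hb, inv_div, inv_div]
    have h : θ * p / q + (1-θ) * p / 2 = p * (θ/q + (1-θ)/2) := by ring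
    rw [h, ← hθeq, mul_one_div, div_self hp0.ne']
  set μ : ℝ := ((2:ℝ) ^ n)⁻¹ with hμ
  have hμ0 : 0 < μ := by positivity
  set A : (Fin n → Bool) → ℝ := fun δ => ‖g δ‖ with hAdef
  have hA0 : ∀ δ, 0 ≤ A δ := fun δ => norm_nonneg _
  have hpsum : θ * p + (1-θ) * p = p := by ring
  have hqa : θ * p * a = q := by
    rw [ha]
    field_simp
  have h2b : (1-θ) * p * b = 2 := by
    rw [hb]; have h1θ : (1-θ) ≠ 0 := (by linarith : (0:ℝ) < 1-θ).ne'
    field_simp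
  have key : ∑ δ : Fin n → Bool, μ * A δ ^ p
      ≤ (∑ δ : Fin n → Bool, μ * A δ ^ q) ^ (1/a)
          * (∑ δ : Fin n → Bool, μ * A δ ^ (2:ℝ)) ^ (1/b) := by
    have H := Real.inner_le_Lp_mul_Lq_of_nonneg Finset.univ
      (f := fun δ => μ ^ (1/a) * A δ ^ (θ*p))
      (g := fun δ => μ ^ (1/b) * A δ ^ ((1-θ)*p))
      (Real.holderConjugate_iff.mpr ⟨ha1, hab⟩) (fun δ _ => by positivity) (fun δ _ => by positivity)
    have hLHS : ∀ δ : Fin n → Bool,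
        (μ ^ (1/a) * A δ ^ (θ*p)) * (μ ^ (1/b) * A δ ^ ((1-θ)*p)) = μ * A δ ^ p := by
      intro δ
      have e1 : μ ^ (1/a) * μ ^ (1/b) = μ := by
        rw [← Real.rpow_add hμ0, one_div, one_div, hab, Real.rpow_one]
      have e2 : A δ ^ (θ*p) * A δ ^ ((1-θ)*p) = A δ ^ p := by
        rw [← Real.rpow_add' (hA0 δ) (by rw [hpsum]; exact hp0.ne'), hpsum]
      calc (μ ^ (1/a) * A δ ^ (θ*p)) * (μ ^ (1/b) * A δ ^ ((1-θ)*p))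
          = (μ ^ (1/a) * μ ^ (1/b)) * (A δ ^ (θ*p) * A δ ^ ((1-θ)*p)) := by ring
        _ = μ * A δ ^ p := by rw [e1, e2]
    have hR1 : ∀ δ : Fin n → Bool,
        (μ ^ (1/a) * A δ ^ (θ*p)) ^ a = μ * A δ ^ q := by
      intro δ
      rw [Real.mul_rpow (by positivity) (by positivity),
        ← Real.rpow_mul hμ0.le, one_div, inv_mul_cancel₀ ha0.ne', Real.rpow_one,
        ← Real.rpow_mul (hA0 δ), hqa]
    have hR2 : ∀ δ : Fin n → Bool,
        (μ ^ (1/b) * A δ ^ ((1-θ)*p)) ^ b = μ * A δ ^ (2:ℝ) := by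
      intro δ
      rw [Real.mul_rpow (by positivity) (by positivity),
        ← Real.rpow_mul hμ0.le, one_div, inv_mul_cancel₀ hb0.ne', Real.rpow_one,
        ← Real.rpow_mul (hA0 δ), h2b]
    rw [Finset.sum_congr rfl fun δ _ => hLHS δ] at H
    rw [Finset.sum_congr rfl fun δ _ => hR1 δ] at H
    rw [Finset.sum_congr rfl fun δ _ => hR2 δ] at H
    exact H
  have hSq0 : (0:ℝ) ≤ ∑ δ : Fin n → Bool, μ * A δ ^ q :=
    Finset.sum_nonneg fun δ _ => mul_nonneg hμ0.le (Real.rpow_nonneg (hA0 δ) _)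
  have hS20 : (0:ℝ) ≤ ∑ δ : Fin n → Bool, μ * A δ ^ (2:ℝ) :=
    Finset.sum_nonneg fun δ _ => mul_nonneg hμ0.le (Real.rpow_nonneg (hA0 δ) _)
  have hSp0 : (0:ℝ) ≤ ∑ δ : Fin n → Bool, μ * A δ ^ p :=
    Finset.sum_nonneg fun δ _ => mul_nonneg hμ0.le (Real.rpow_nonneg (hA0 δ) _)
  have hpe : pnorm p g = (∑ δ : Fin n → Bool, μ * A δ ^ p) ^ (1/p) := by
    unfold pnorm
    rw [Finset.mul_sum]
  have hqe : pnorm q g = (∑ δ : Fin n → Bool, μ * A δ ^ q) ^ (1/q) := by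
    unfold pnorm
    rw [Finset.mul_sum]
  have h2e : pnorm 2 g = (∑ δ : Fin n → Bool, μ * A δ ^ (2:ℝ)) ^ (1/(2:ℝ)) := by
    unfold pnorm
    rw [Finset.mul_sum]
  rw [hpe, hqe, h2e]
  have step1 : (∑ δ : Fin n → Bool, μ * A δ ^ p) ^ (1/p)
      ≤ ((∑ δ : Fin n → Bool, μ * A δ ^ q) ^ (1/a)
          * (∑ δ : Fin n → Bool, μ * A δ ^ (2:ℝ)) ^ (1/b)) ^ (1/p) :=
    Real.rpow_le_rpow hSp0 key (by positivity)
  refine step1.trans (le_of_eq ?_)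
  rw [Real.mul_rpow (Real.rpow_nonneg hSq0 _) (Real.rpow_nonneg hS20 _),
    ← Real.rpow_mul hSq0, ← Real.rpow_mul hS20,
    ← Real.rpow_mul hSq0, ← Real.rpow_mul hS20]
  have hex1 : 1/a * (1/p) = 1/q * θ := by
    rw [ha, one_div_div]
    field_simp
  have hex2 : 1/b * (1/p) = 1/(2:ℝ) * (1-θ) := by
    rw [hb, one_div_div]
    field_simp
  rw [hex1, hex2]
  ring

end HeatAux

/-- Heat smoothing on tail spaces for `p ∈ (1,2)`:
`‖e^{-tΔ}f‖_p ≤ exp(-(1-θ)td) ‖f‖₂^{1-θ} ‖f‖_{p-ε}^θ`. -/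
theorem heat_tail_interp_lt2 (n d : ℕ) (f : (Fin n → Bool) → ℂ)
    (p ε θ : ℝ) (hp1 : 1 < p) (hp2 : p < 2) (hε0 : 0 < ε) (hε1 : ε < p - 1)
    (hθ0 : 0 < θ) (hθ1 : θ < 1)
    (hθ : 1 / p = θ / (p - ε) + (1 - θ) / 2)
    (hf : ∀ S : Finset (Fin n), S.card < d → fourierCoeff f S = 0)
    (t : ℝ) (ht : 0 ≤ t) :
    pnorm p (heat t f) ≤
      Real.exp (-(1 - θ) * t * d) * pnorm 2 f ^ (1 - θ) * pnorm (p - ε) f ^ θ := by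
  set q := p - ε with hq
  have hq1 : 1 < q := by rw [hq]; linarith
  have hqp : q < p := by rw [hq]; linarith
  have h2 := HeatAux.interp (heat t f) p q θ hq1 hqp hp2 hθ0 hθ1 hθ
  have h3 := HeatAux.pnorm_heat_le q t hq1.le ht f
  have h4 := HeatAux.pnorm_two_heat_le d f hf t ht
  have hθ1' : (0:ℝ) ≤ 1 - θ := by linarith
  calc pnorm p (heat t f)
      ≤ pnorm 2 (heat t f) ^ (1 - θ) * pnorm q (heat t f) ^ θ := h2
    _ ≤ (Real.exp (-t * d) * pnorm 2 f) ^ (1 - θ) * pnorm q f ^ θ := by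
        refine mul_le_mul (Real.rpow_le_rpow (HeatAux.pnorm_nonneg _ _) h4 hθ1')
          (Real.rpow_le_rpow (HeatAux.pnorm_nonneg _ _) h3 hθ0.le)
          (Real.rpow_nonneg (HeatAux.pnorm_nonneg _ _) _)
          (Real.rpow_nonneg (mul_nonneg (Real.exp_pos _).le (HeatAux.pnorm_nonneg _ _)) _)
    _ = Real.exp (-(1 - θ) * t * d) * pnorm 2 f ^ (1 - θ) * pnorm q f ^ θ := by
        rw [Real.mul_rpow (Real.exp_pos _).le (HeatAux.pnorm_nonneg _ _),
          ← Real.exp_mul]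
        ring_nf
end

section
/- Let T_d denote the d-th Chebyshev polynomial of the first kind and define f(δ) = T_d((δ_1+⋯+δ_n)/n) on {-1,1}^n. Then f ∈ Deg_{≤d}, ‖f‖_{L^∞} ≤ 1, and Δf evaluated at the all-ones point equals (n/2)·(T_d(1) − T_d(1 − 2/n)); consequently ‖Δf‖_{L^∞} ≥ (n/2)·(T_d(1) − T_d(1 − 2/n))·‖f‖_{L^∞}. -/
open Finset
open scoped ENNReal

namespace Hamming

variable {n : ℕ}

lemma sgn_not (b : Bool) : sgn (!b) = - sgn b := by cases b <;> simp [sgn]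

lemma flip_involutive (j : Fin n) : Function.Involutive (flip · j) := by
  intro δ
  funext i
  by_cases h : i = j
  · subst h; simp [flip]
  · simp [flip, Function.update_of_ne h]

lemma sum_flip {M : Type*} [AddCommMonoid M] (j : Fin n) (G : (Fin n → Bool) → M) :
    ∑ δ : Fin n → Bool, G (flip δ j) = ∑ δ : Fin n → Bool, G δ :=
  Fintype.sum_bijective (flip · j) (flip_involutive j).bijective _ _ (fun _ => rfl)

lemma walsh_flip (S : Finset (Fin n)) (j₀ : Fin n) (hj : j₀ ∈ S) (δ : Fin n → Bool) :
    walsh S (flip δ j₀) = - walsh S δ := by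
  unfold walsh
  rw [← Finset.mul_prod_erase S _ hj, ← Finset.mul_prod_erase S (fun j => sgn (δ j)) hj]
  have h2 : ∀ j ∈ S.erase j₀, sgn (flip δ j₀ j) = sgn (δ j) := by
    intro j hjmem
    have : j ≠ j₀ := Finset.ne_of_mem_erase hjmem
    simp [flip, Function.update_of_ne this]
  rw [Finset.prod_congr rfl h2]
  have h1 : flip δ j₀ j₀ = !δ j₀ := by simp [flip]
  rw [h1, sgn_not]
  ring

lemma sum_vanish (S : Finset (Fin n)) (j₀ : Fin n) (hj : j₀ ∈ S)
    (F : (Fin n → Bool) → ℂ) (hF : ∀ δ, F (flip δ j₀) = F δ) :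
    ∑ δ : Fin n → Bool, F δ * walsh S δ = 0 := by
  have h := sum_flip j₀ (fun δ => F δ * walsh S δ)
  simp only [hF] at h
  rw [Finset.sum_congr rfl (fun δ _ => by rw [walsh_flip S j₀ hj δ, mul_neg]),
    Finset.sum_neg_distrib] at h
  linear_combination (-1/2 : ℂ) * h

lemma sum_pow_walsh (S : Finset (Fin n)) (k : ℕ) (hk : k < S.card) :
    ∑ δ : Fin n → Bool, (∑ j : Fin n, sgn (δ j)) ^ k * walsh S δ = 0 := by
  have hexp : ∀ δ : Fin n → Bool, (∑ j : Fin n, sgn (δ j)) ^ k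
      = ∑ g : Fin k → Fin n, ∏ i : Fin k, sgn (δ (g i)) := by
    intro δ
    calc (∑ j : Fin n, sgn (δ j)) ^ k
        = ∏ _i : Fin k, (∑ j : Fin n, sgn (δ j)) := by
          rw [Finset.prod_const, Finset.card_univ, Fintype.card_fin]
      _ = ∑ g ∈ Fintype.piFinset (fun _ : Fin k => (Finset.univ : Finset (Fin n))),
            ∏ i : Fin k, sgn (δ (g i)) := Finset.prod_univ_sum _ _
      _ = ∑ g : Fin k → Fin n, ∏ i : Fin k, sgn (δ (g i)) := by rw [Fintype.piFinset_univ]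
  simp_rw [hexp, Finset.sum_mul]
  rw [Finset.sum_comm]
  refine Finset.sum_eq_zero fun g _ => ?_
  have hcard : (Finset.image g Finset.univ).card < S.card :=
    lt_of_le_of_lt (le_trans Finset.card_image_le (by simp)) hk
  have hnsub : ¬ S ⊆ Finset.image g Finset.univ := fun hsub =>
    absurd (Finset.card_le_card hsub) (by omega)
  obtain ⟨j₀, hj₀S, hj₀⟩ := Finset.not_subset.mp hnsub
  refine sum_vanish S j₀ hj₀S _ (fun δ => ?_)
  refine Finset.prod_congr rfl fun i _ => ?_
  have hne : g i ≠ j₀ := fun h => hj₀ (Finset.mem_image.mpr ⟨i, Finset.mem_univ i, h⟩)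
  simp [flip, Function.update_of_ne hne]

lemma T_natDegree_le_aux : ∀ d : ℕ, (Polynomial.Chebyshev.T ℝ (d : ℤ)).natDegree ≤ d ∧
    (Polynomial.Chebyshev.T ℝ ((d : ℤ) + 1)).natDegree ≤ d + 1
  | 0 => by
      constructor
      · simp [Polynomial.Chebyshev.T_zero]
      · simpa using Polynomial.natDegree_X_le (R := ℝ)
  | (d+1) => by
      obtain ⟨h1, h2⟩ := T_natDegree_le_aux d
      have e : (((d : ℕ) + 1 : ℕ) : ℤ) = (d : ℤ) + 1 := by push_cast; ring
      refine ⟨by rw [e]; exact h2, ?_⟩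
      have e2 : (((d : ℕ) + 1 : ℕ) : ℤ) + 1 = (d : ℤ) + 2 := by push_cast; ring
      rw [e2, Polynomial.Chebyshev.T_add_two]
      refine le_trans (Polynomial.natDegree_sub_le _ _) (max_le ?_ (by omega))
      refine le_trans Polynomial.natDegree_mul_le ?_
  -- natDegree (2*X) + natDegree (T (d+1)) ≤ d + 2
      have hX : (2 * Polynomial.X : Polynomial ℝ).natDegree ≤ 1 :=
        le_trans Polynomial.natDegree_mul_le (by simp)
      omega

lemma T_natDegree_le (d : ℕ) : (Polynomial.Chebyshev.T ℝ (d : ℤ)).natDegree ≤ d :=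
  (T_natDegree_le_aux d).1

lemma abs_T_le (d : ℕ) (x : ℝ) (h1 : -1 ≤ x) (h2 : x ≤ 1) :
    |(Polynomial.Chebyshev.T ℝ (d : ℤ)).eval x| ≤ 1 := by
  have hx : x = Real.cos (Real.arccos x) := (Real.cos_arccos h1 h2).symm
  rw [hx, Polynomial.Chebyshev.T_real_cos]
  exact Real.abs_cos_le_one _

lemma hite (b : Bool) : ((if b then (1:ℝ) else -1 : ℝ) : ℂ) = sgn b := by
  cases b <;> simp [sgn]

end Hamming

open Hamming
/-- The Chebyshev construction: `f(δ) = T_d((δ₁+⋯+δ_n)/n)` has degree at most `d`,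
`‖f‖_∞ ≤ 1`, `Δf` at the all-ones point equals `(n/2)(T_d(1) - T_d(1-2/n))`, and hence
`‖Δf‖_∞ ≥ (n/2)(T_d(1) - T_d(1-2/n)) ‖f‖_∞`. -/
theorem chebyshev_example (n : ℕ) (hn : 0 < n) (d : ℕ) (f : (Fin n → Bool) → ℂ)
    (hfdef : ∀ δ, f δ =
      ((Polynomial.Chebyshev.T ℝ (d : ℤ)).eval
        ((∑ j : Fin n, (if δ j then (1 : ℝ) else -1)) / n) : ℝ)) :
    (∀ S : Finset (Fin n), d < S.card → fourierCoeff f S = 0) ∧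
    supnorm f ≤ 1 ∧
    lap f (fun _ => true) =
      (((n : ℝ) / 2) * ((Polynomial.Chebyshev.T ℝ (d : ℤ)).eval 1 -
        (Polynomial.Chebyshev.T ℝ (d : ℤ)).eval ((1 : ℝ) - 2 / (n : ℝ))) : ℝ) ∧
    supnorm (lap f) ≥
      ((n : ℝ) / 2) * ((Polynomial.Chebyshev.T ℝ (d : ℤ)).eval 1 -
        (Polynomial.Chebyshev.T ℝ (d : ℤ)).eval ((1 : ℝ) - 2 / (n : ℝ))) * supnorm f := by
  set P := Polynomial.Chebyshev.T ℝ (d : ℤ) with hP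
  have hn0 : (n : ℝ) ≠ 0 := Nat.cast_ne_zero.mpr hn.ne'
  -- Fourier expansion of f in ℂ
  have hcast : ∀ δ : Fin n → Bool, f δ = ∑ k ∈ Finset.range (P.natDegree + 1),
      (P.coeff k : ℂ) * ((∑ j : Fin n, sgn (δ j)) / (n : ℂ)) ^ k := by
    intro δ
    rw [hfdef δ, Polynomial.eval_eq_sum_range]
    push_cast
    simp_rw [hite]
  -- Part 1
  have part1 : ∀ S : Finset (Fin n), d < S.card → fourierCoeff f S = 0 := by
    intro S hS
    have hsum0 : ∑ δ : Fin n → Bool, f δ * walsh S δ = 0 := by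
      simp_rw [hcast, Finset.sum_mul]
      rw [Finset.sum_comm]
      refine Finset.sum_eq_zero fun k hk => ?_
      have hk' : k < S.card := by
        have hkr := Finset.mem_range.mp hk
        have hdeg := T_natDegree_le d
        rw [← hP] at hdeg
        omega
      calc ∑ δ : Fin n → Bool, (P.coeff k : ℂ) * ((∑ j : Fin n, sgn (δ j)) / (n : ℂ)) ^ k
            * walsh S δ
          = (P.coeff k : ℂ) * ((n : ℂ) ^ k)⁻¹ *
              ∑ δ : Fin n → Bool, (∑ j : Fin n, sgn (δ j)) ^ k * walsh S δ := by
            rw [Finset.mul_sum]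
            exact Finset.sum_congr rfl fun δ _ => by rw [div_pow]; ring
        _ = 0 := by rw [sum_pow_walsh S k hk', mul_zero]
    unfold Hamming.fourierCoeff
    rw [hsum0, mul_zero]
  -- supnorm f ≤ 1
  have habs : ∀ δ : Fin n → Bool, ‖f δ‖ ≤ 1 := by
    intro δ
    rw [hfdef δ, Complex.norm_real, Real.norm_eq_abs]
    set r := ∑ j : Fin n, (if δ j then (1:ℝ) else -1) with hr
    have hrabs : |r| ≤ (n : ℝ) := by
      have hb : ∀ j ∈ (Finset.univ : Finset (Fin n)), |if δ j then (1:ℝ) else -1| ≤ 1 :=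
        fun j _ => by by_cases h : δ j <;> simp [h]
      calc |r| ≤ ∑ j : Fin n, |if δ j then (1:ℝ) else -1| := Finset.abs_sum_le_sum_abs _ _
        _ ≤ ∑ _j : Fin n, (1:ℝ) := Finset.sum_le_sum hb
        _ = (n : ℝ) := by simp
    have hdiv : |r / (n:ℝ)| ≤ 1 := by
      rw [abs_div, abs_of_nonneg (by positivity : (0:ℝ) ≤ (n:ℝ))]
      rw [div_le_one (by positivity)]
      exact hrabs
    obtain ⟨hd1, hd2⟩ := abs_le.mp hdiv
    exact abs_T_le d _ hd1 hd2
  have part2 : supnorm f ≤ 1 := Finset.sup'_le _ _ fun δ _ => habs δ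
  -- values at the all-ones point and its flips
  have hall : f (fun _ => true) = ((P.eval 1 : ℝ) : ℂ) := by
    rw [hfdef]
    simp [div_self hn0]
  have hflipval : ∀ j : Fin n, f (flip (fun _ => true) j)
      = ((P.eval (1 - 2/(n:ℝ)) : ℝ) : ℂ) := by
    intro j
    rw [hfdef]
    have hsum2 : ∑ j' : Fin n, (if flip (fun _ => true) j j' then (1:ℝ) else -1)
        = (n : ℝ) - 2 := by
      have hupd : ∀ j' : Fin n, (if flip (fun _ => true) j j' then (1:ℝ) else -1)
          = Function.update (fun _ : Fin n => (1:ℝ)) j (-1) j' := by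
        intro j'
        by_cases h : j' = j
        · subst h; simp [Hamming.flip]
        · simp [Hamming.flip, Function.update_of_ne h]
      rw [Finset.sum_congr rfl fun j' _ => hupd j',
        Finset.sum_update_of_mem (Finset.mem_univ j)]
      simp only [Finset.sum_const, smul_eq_mul, mul_one]
      have hcard : ((Finset.univ : Finset (Fin n)) \ {j}).card = n - 1 := by
        rw [Finset.sdiff_singleton_eq_erase, Finset.card_erase_of_mem (Finset.mem_univ j),
          Finset.card_univ, Fintype.card_fin]
      rw [hcard, nsmul_eq_mul, mul_one, Nat.cast_sub hn]
      push_cast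
      ring
    rw [hsum2, sub_div, div_self hn0]
  have part3 : lap f (fun _ => true) =
      (((n : ℝ) / 2) * (P.eval 1 - P.eval ((1 : ℝ) - 2 / (n : ℝ))) : ℝ) := by
    unfold Hamming.lap Hamming.del
    rw [Finset.sum_congr rfl fun j _ => by rw [hall, hflipval j]]
    rw [Finset.sum_const, Finset.card_univ, Fintype.card_fin, nsmul_eq_mul]
    push_cast
    ring
  refine ⟨part1, part2, part3, ?_⟩
  -- Part 4
  set c : ℝ := ((n : ℝ) / 2) * (P.eval 1 - P.eval ((1 : ℝ) - 2 / (n : ℝ))) with hc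
  have hT1 : P.eval 1 = 1 := by
    have h := Polynomial.Chebyshev.T_real_cos 0 (d : ℤ)
    simpa [hP] using h
  have hn1 : (1 : ℝ) ≤ (n : ℝ) := by exact_mod_cast hn
  have hx1 : -1 ≤ (1 : ℝ) - 2 / (n : ℝ) := by
    have h2n : 2 / (n : ℝ) ≤ 2 / 1 := by
      apply div_le_div_of_nonneg_left (by norm_num) (by norm_num) hn1
    linarith
  have hx2 : (1 : ℝ) - 2 / (n : ℝ) ≤ 1 := by
    have : 0 ≤ 2 / (n : ℝ) := by positivity
    linarith
  have hTle : P.eval ((1 : ℝ) - 2 / (n : ℝ)) ≤ 1 :=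
    le_trans (le_abs_self _) (abs_T_le d _ hx1 hx2)
  have hc0 : 0 ≤ c := by
    apply mul_nonneg (by positivity)
    rw [hT1]; linarith
  have hsuplap : c ≤ supnorm (lap f) := by
    have h1 : ‖(lap f (fun _ => true))‖ = c := by
      rw [part3, Complex.norm_real, Real.norm_eq_abs, abs_of_nonneg hc0]
    calc c = ‖(lap f (fun _ => true))‖ := h1.symm
      _ ≤ supnorm (lap f) := by
        unfold Hamming.supnorm
        exact Finset.le_sup' (fun δ => ‖lap f δ‖) (Finset.mem_univ _)
  calc c * supnorm f ≤ c * 1 := mul_le_mul_of_nonneg_left part2 hc0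
    _ = c := mul_one c
    _ ≤ supnorm (lap f) := hsuplap
end
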